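/- Let F = F_I + F_R, where F_I(t) = p_1(t)·exp(i·ξ_1·t) + … + p_n(t)·exp(i·ξ_n·t) with ξ_1, …, ξ_n distinct real numbers, and F_R(t) = q_1(t)·exp(z_1·t) + … + q_m(t)·exp(z_m·t) with z_1, …, z_m distinct complex numbers each having nonzero real part, and p_1, …, p_n, q_1, …, q_m complex polynomials. If sup_{t ∈ ℝ} |F(t)| < M for some M > 0, then q_1 = … = q_m = 0 (so F_R ≡ 0) and p_1, …, p_n are constants; in particular F is a generalized trigonometric polynomial and hence belongs to AP. -/

import Mathlib

/-!
Group the terms as `∑ⱼ rⱼ(t) e^{μⱼ t}` with distinct exponents `μⱼ` (the `i ξⱼ` and the `zⱼ`).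
For real `h`, the operator `f ↦ f(· + h) - e^{μ_ν h} f` preserves boundedness and the shape of
the sum: it replaces `rⱼ` by `e^{μⱼ h} rⱼ(· + h) - e^{μ_ν h} rⱼ`, which lowers the degree of
`r_ν` and, when `e^{μᵢ h} ≠ e^{μ_ν h}`, keeps the degree of `rᵢ`. Iterating eliminates every
term but the `i`-th, leaving a bounded `s(t) e^{μᵢ t}` with `deg s = deg rᵢ`. A nonzero
polynomial stays away from zero at infinity, so `Re μᵢ = 0`, and then `s` is a bounded
polynomial on `ℝ`, hence constant.
-/

open Complex
open scoped ENNReal NNReal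

noncomputable section

/-- A generalized trigonometric polynomial: `t ↦ ∑ aⱼ exp(i λⱼ t)` with `aⱼ ∈ ℂ`, `λⱼ ∈ ℝ`. -/
def IsTrigPoly (f : ℝ → ℂ) : Prop :=
  ∃ (N : ℕ) (a : Fin N → ℂ) (l : Fin N → ℝ),
    f = fun t : ℝ => ∑ j, a j * Complex.exp (Complex.I * (l j : ℂ) * (t : ℂ))

/-- Membership in AP: the sup-norm closure, inside bounded continuous functions `ℝ → ℂ`,
of the set of generalized trigonometric polynomials. -/
def APMem (f : ℝ → ℂ) : Prop :=
  Continuous f ∧ (∃ M : ℝ, ∀ t : ℝ, ‖f t‖ ≤ M) ∧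
    ∀ ε : ℝ, 0 < ε → ∃ p : ℝ → ℂ, IsTrigPoly p ∧ ∀ t : ℝ, ‖f t - p t‖ ≤ ε

open Polynomial Filter Topology

namespace Polynomial

section Taylor

variable {R : Type*} [CommRing R]

theorem degree_taylor_sub_lt {r : R[X]} (hr : r ≠ 0) (h : R) :
    (taylor h r - r).degree < r.degree :=
  degree_taylor r h ▸ degree_sub_lt_left (degree_taylor r h)
    ((taylor_injective h).ne_iff' (map_zero _) |>.2 hr) (leadingCoeff_taylor h r)

theorem degree_C_mul_taylor_sub_C_mul_le (a c h : R) (r : R[X]) :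
    (C a * taylor h r - C c * r).degree ≤ r.degree := by
  simp only [← smul_eq_C_mul]
  exact (degree_sub_le _ _).trans <|
    max_le ((degree_smul_le _ _).trans (degree_taylor r h).le) (degree_smul_le _ _)

theorem degree_C_mul_taylor_sub_C_mul_lt {r : R[X]} (hr : r ≠ 0) (a h : R) :
    (C a * taylor h r - C a * r).degree < r.degree := by
  rw [← mul_sub, ← smul_eq_C_mul]
  exact (degree_smul_le _ _).trans_lt (degree_taylor_sub_lt hr h)

theorem degree_C_mul_taylor_sub_C_mul [NoZeroDivisors R] {a c : R} (hac : a ≠ c) (h : R)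
    (r : R[X]) : (C a * taylor h r - C c * r).degree = r.degree := by
  rcases eq_or_ne r 0 with rfl | hr
  · simp
  have hsplit : C a * taylor h r - C c * r = C (a - c) * r + C a * (taylor h r - r) := by
    rw [C_sub]; ring
  rw [hsplit, degree_add_eq_left_of_degree_lt] <;> rw [degree_C_mul (sub_ne_zero.2 hac)]
  rw [← smul_eq_C_mul]
  exact (degree_smul_le _ _).trans_lt (degree_taylor_sub_lt hr h)

end Taylor

theorem tendsto_norm_eval_ofReal_cocompact {s : ℂ[X]} (hs : 0 < s.degree) :
    Tendsto (fun t : ℝ => ‖s.eval (t : ℂ)‖) (cocompact ℝ) atTop :=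
  s.tendsto_norm_atTop hs (by simpa only [norm_real] using tendsto_norm_cocompact_atTop (E := ℝ))

theorem exists_pos_eventually_le_norm_eval_ofReal {s : ℂ[X]} (hs : s ≠ 0) :
    ∃ c > 0, ∀ᶠ t : ℝ in cocompact ℝ, c ≤ ‖s.eval (t : ℂ)‖ := by
  rcases lt_or_ge 0 s.degree with hdeg | hdeg
  · exact ⟨1, one_pos, (tendsto_norm_eval_ofReal_cocompact hdeg).eventually_ge_atTop 1⟩
  · rw [eq_C_of_degree_le_zero hdeg] at hs ⊢
    exact ⟨_, norm_pos_iff.2 (C_ne_zero.1 hs), by simp⟩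

end Polynomial

theorem exists_exp_mul_ne {w w' : ℂ} (hw : w ≠ w') : ∃ h : ℝ, exp (w * h) ≠ exp (w' * h) := by
  by_contra! H
  have hderiv (v : ℂ) : HasDerivAt (fun h : ℝ => exp (v * h)) v 0 := by
    simpa using ((hasDerivAt_id (0 : ℝ)).ofReal_comp.const_mul v).cexp
  exact hw ((hderiv w).unique (funext H ▸ hderiv w'))

theorem norm_eval_mul_exp (s : ℂ[X]) (μ : ℂ) (t : ℝ) :
    ‖s.eval (t : ℂ) * exp (μ * t)‖ = ‖s.eval (t : ℂ)‖ * Real.exp (μ.re * t) := by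
  simp [norm_exp]

theorem re_eq_zero_and_degree_eq_zero_of_bounded_eval_mul_exp {s : ℂ[X]} (hs : s ≠ 0) {μ : ℂ}
    {K : ℝ} (hK : ∀ t : ℝ, ‖s.eval (t : ℂ) * exp (μ * t)‖ ≤ K) : μ.re = 0 ∧ s.degree = 0 := by
  simp only [norm_eval_mul_exp] at hK
  have hre : μ.re = 0 := by
    by_contra hne
    obtain ⟨c, hc, hsc⟩ := exists_pos_eventually_le_norm_eval_ofReal hs
    have blowup (l : Filter ℝ) [l.NeBot] (hl : l ≤ cocompact ℝ)
        (hlim : Tendsto (fun t => μ.re * t) l atTop) : False := by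
      have hbig := ((Real.tendsto_exp_atTop.comp hlim).const_mul_atTop hc).eventually_gt_atTop K
      obtain ⟨t, hct, hKt⟩ := ((hsc.filter_mono hl).and hbig).exists
      exact (hK t).not_gt (hKt.trans_le (mul_le_mul_of_nonneg_right hct (Real.exp_pos _).le))
    rcases lt_or_gt_of_ne hne with hneg | hpos
    · exact blowup atBot atBot_le_cocompact (tendsto_id.const_mul_atBot_of_neg hneg)
    · exact blowup atTop atTop_le_cocompact (tendsto_id.const_mul_atTop hpos)
  refine ⟨hre, le_antisymm (not_lt.1 fun hdeg => ?_) (zero_le_degree_iff.2 hs)⟩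
  simp only [hre, zero_mul, Real.exp_zero, mul_one] at hK
  obtain ⟨t, ht⟩ := ((tendsto_norm_eval_ofReal_cocompact hdeg).eventually_gt_atTop K).exists
  exact (hK t).not_gt ht

section ExpPoly

variable {ι : Type*} [Fintype ι]

def expPoly (r : ι → ℂ[X]) (μ : ι → ℂ) (t : ℝ) : ℂ :=
  ∑ j, (r j).eval (t : ℂ) * exp (μ j * t)

theorem expPoly_shift_sub (r : ι → ℂ[X]) (μ : ι → ℂ) (h : ℝ) (c : ℂ) (t : ℝ) :
    expPoly (fun j => C (exp (μ j * h)) * taylor (h : ℂ) (r j) - C c * r j) μ t =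
      expPoly r μ (t + h) - c * expPoly r μ t := by
  simp only [expPoly, Finset.mul_sum, ← Finset.sum_sub_distrib, eval_sub, eval_mul, eval_C,
    taylor_eval, ofReal_add, mul_add, exp_add]
  exact Finset.sum_congr rfl fun j _ => by ring

theorem expPoly_eq_single {r : ι → ℂ[X]} (μ : ι → ℂ) {i : ι} (hr : ∀ j ≠ i, r j = 0) (t : ℝ) :
    expPoly r μ t = (r i).eval (t : ℂ) * exp (μ i * t) :=
  Finset.sum_eq_single_of_mem i (Finset.mem_univ i) fun j _ hj => by simp [hr j hj]

theorem exists_bounded_term_of_bounded_expPoly {μ : ι → ℂ} (hμ : Function.Injective μ) (i : ι)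
    (r : ι → ℂ[X]) {K : ℝ} (hK : ∀ t, ‖expPoly r μ t‖ ≤ K) :
    ∃ s : ℂ[X], s.degree = (r i).degree ∧
      ∃ K' : ℝ, ∀ t : ℝ, ‖s.eval (t : ℂ) * exp (μ i * t)‖ ≤ K' := by
  induction hd : (fun j => (r j).degree) using WellFoundedLT.induction generalizing r K with
  | ind d ih =>
  subst hd
  by_cases hrest : ∀ j ≠ i, r j = 0
  · exact ⟨r i, rfl, K, fun t => expPoly_eq_single μ hrest t ▸ hK t⟩
  obtain ⟨ν, hνi, hν⟩ : ∃ ν ≠ i, r ν ≠ 0 := by simpa using hrest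
  obtain ⟨h, hh⟩ := exists_exp_mul_ne (hμ.ne hνi.symm)
  set r' : ι → ℂ[X] := fun j =>
    C (exp (μ j * h)) * taylor (h : ℂ) (r j) - C (exp (μ ν * h)) * r j
  have hlt : (fun j => (r' j).degree) < fun j => (r j).degree :=
    Pi.lt_def.2 ⟨fun j => degree_C_mul_taylor_sub_C_mul_le _ _ _ _, ν,
      degree_C_mul_taylor_sub_C_mul_lt hν _ _⟩
  have hK' : ∀ t, ‖expPoly r' μ t‖ ≤ K + ‖exp (μ ν * h)‖ * K := fun t => by
    rw [expPoly_shift_sub]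
    exact (norm_sub_le _ _).trans (add_le_add (hK _) (by rw [norm_mul]; gcongr; exact hK t))
  obtain ⟨s, hs, hbdd⟩ := ih _ hlt r' hK' rfl
  exact ⟨s, hs.trans (degree_C_mul_taylor_sub_C_mul hh _ _), hbdd⟩

theorem re_eq_zero_and_degree_eq_zero_of_bounded_expPoly {r : ι → ℂ[X]} {μ : ι → ℂ}
    (hμ : Function.Injective μ) {K : ℝ} (hK : ∀ t, ‖expPoly r μ t‖ ≤ K) {i : ι} (hi : r i ≠ 0) :
    (μ i).re = 0 ∧ (r i).degree = 0 := by
  obtain ⟨s, hs, K', hK'⟩ := exists_bounded_term_of_bounded_expPoly hμ i r hK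
  rw [← hs]
  have hs0 : s ≠ 0 := by rwa [Ne, ← degree_eq_bot, hs, degree_eq_bot]
  exact re_eq_zero_and_degree_eq_zero_of_bounded_eval_mul_exp hs0 hK'

end ExpPoly

theorem IsTrigPoly.apMem {f : ℝ → ℂ} (hf : IsTrigPoly f) : APMem f := by
  refine ⟨?_, ?_, fun ε hε => ⟨f, hf, fun t => by simpa using hε.le⟩⟩ <;>
    obtain ⟨N, a, l, rfl⟩ := hf
  · fun_prop
  · refine ⟨∑ j, ‖a j‖, fun t => (norm_sum_le _ _).trans (Finset.sum_le_sum fun j _ => ?_)⟩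
    simp [norm_exp]

theorem bounded_implies_trigPoly_general (n m : ℕ)
    (p : Fin n → Polynomial ℂ) (ξ : Fin n → ℝ)
    (q : Fin m → Polynomial ℂ) (z : Fin m → ℂ)
    (hξ : Function.Injective ξ) (hz : Function.Injective z)
    (hre : ∀ j, (z j).re ≠ 0)
    (F : ℝ → ℂ)
    (hF : F = fun t : ℝ =>
      (∑ j, (p j).eval (t : ℂ) * Complex.exp (Complex.I * (ξ j : ℂ) * (t : ℂ)))
        + ∑ j, (q j).eval (t : ℂ) * Complex.exp (z j * (t : ℂ)))
    (M : ℝ)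
    (hbd : (⨆ t : ℝ, (‖F t‖₊ : ℝ≥0∞)) < ENNReal.ofReal M) :
    (∀ j, q j = 0) ∧ (∀ j, ∃ a : ℂ, p j = Polynomial.C a) ∧ IsTrigPoly F ∧ APMem F := by
  set μ : Fin n ⊕ Fin m → ℂ := Sum.elim (fun j => I * ξ j) z
  have hμ : Function.Injective μ :=
    ((mul_right_injective₀ I_ne_zero).comp (ofReal_injective.comp hξ)).sumElim hz
      fun a b h => hre b (by simp [← h])
  have hFexp : F = expPoly (Sum.elim p q) μ := by
    ext t; simp [hF, expPoly, Fintype.sum_sum_type, μ]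
  have hbound (t : ℝ) : ‖expPoly (Sum.elim p q) μ t‖ ≤ M :=
    hFexp ▸ (ENNReal.coe_lt_ofReal.1 ((le_iSup _ t).trans_lt hbd)).le
  have key (i : Fin n ⊕ Fin m) :=
    re_eq_zero_and_degree_eq_zero_of_bounded_expPoly hμ hbound (i := i)
  have hq (j : Fin m) : q j = 0 := by_contra fun h => hre j (key (.inr j) h).1
  have hp (j : Fin n) : ∃ a : ℂ, p j = C a := by
    by_cases h : p j = 0
    · exact ⟨0, by simp [h]⟩
    · exact ⟨_, eq_C_of_degree_eq_zero (key (.inl j) h).2⟩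
  choose a ha using hp
  have htrig : IsTrigPoly F := ⟨n, a, ξ, by simp [hF, ha, hq]⟩
  exact ⟨hq, fun j => ⟨a j, ha j⟩, htrig, htrig.apMem⟩

/-- If `F = F_I + F_R`, where `F_I(t) = ∑ pⱼ(t) e^{i ξⱼ t}` (distinct real `ξⱼ`) and
`F_R(t) = ∑ qⱼ(t) e^{zⱼ t}` (distinct `zⱼ ∈ ℂ` with nonzero real part), and
`sup_{t ∈ ℝ} |F(t)| < M` for some `M > 0`, then all `qⱼ = 0`, all `pⱼ` are constant, and
`F` is a generalized trigonometric polynomial, hence in AP. -/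
theorem bounded_implies_trigPoly (n m : ℕ)
    (p : Fin n → Polynomial ℂ) (ξ : Fin n → ℝ)
    (q : Fin m → Polynomial ℂ) (z : Fin m → ℂ)
    (hξ : Function.Injective ξ) (hz : Function.Injective z)
    (hre : ∀ j, (z j).re ≠ 0)
    (F : ℝ → ℂ)
    (hF : F = fun t : ℝ =>
      (∑ j, (p j).eval (t : ℂ) * Complex.exp (Complex.I * (ξ j : ℂ) * (t : ℂ)))
        + ∑ j, (q j).eval (t : ℂ) * Complex.exp (z j * (t : ℂ)))
    (M : ℝ) (hM : 0 < M)
    (hbd : (⨆ t : ℝ, (‖F t‖₊ : ℝ≥0∞)) < ENNReal.ofReal M) :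
    (∀ j, q j = 0) ∧ (∀ j, ∃ a : ℂ, p j = Polynomial.C a) ∧ IsTrigPoly F ∧ APMem F :=
  bounded_implies_trigPoly_general n m p ξ q z hξ hz hre F hF M hbd
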